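/- arXiv:math/0409548 — 3 statements merged into one kernel-verified Lean document; each statement's English description precedes it below -/
import Mathlib

section
/- In the additive Gaussian channel y = ρx + w, for all h ∈ ℝ^n the second derivative of log ℓ satisfies ∇²_{h,h} log ℓ(y) = ρ² ( E[⟨x,h⟩² | y] − (E[⟨x,h⟩ | y])² ), i.e. it equals ρ² times the posterior variance of ⟨x,h⟩ given y. -/
/-
Write `ℓ(u) = ∫ e_u dμ` with `e_u(x) = exp (ρ⟪u, x⟫ - ρ²‖x‖²/2)` (`gaussianTilt ρ u x`). For
`‖v - u‖ ≤ 1` one has `‖x‖ᵏ e_v(x) ≤ C_k exp (ρ⟪x, u⟫)`, because the Gaussian factor absorbs both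
the polynomial weight and the shift from `u` to `v`; the right side is integrable by the exponential
moment hypothesis. Hence one may differentiate twice under the integral sign:
`∇ℓ(u) h = ρ ∫ ⟪x, h⟫ e_u dμ` and `∇²ℓ(u)(h, h) = ρ² ∫ ⟪x, h⟫² e_u dμ`, and
`∇² log ℓ (h, h) = ∇²ℓ(h, h) / ℓ - (∇ℓ h / ℓ)²` is `ρ²` times the posterior variance of `⟪x, h⟫`.
-/

open MeasureTheory Real
open scoped RealInnerProductSpace ENNReal

noncomputable def stdGaussian (n : ℕ) : Measure (EuclideanSpace ℝ (Fin n)) :=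
  volume.withDensity
    (fun w => ENNReal.ofReal ((2 * π) ^ (-(n : ℝ) / 2) * Real.exp (-‖w‖ ^ 2 / 2)))

noncomputable def lik (n : ℕ) (ρ : ℝ) (μX : Measure (EuclideanSpace ℝ (Fin n)))
    (u : EuclideanSpace ℝ (Fin n)) : ℝ :=
  ∫ x, Real.exp (ρ * ⟪u, x⟫ - ρ ^ 2 / 2 * ‖x‖ ^ 2) ∂μX

noncomputable def postExp (n : ℕ) (ρ : ℝ) (μX : Measure (EuclideanSpace ℝ (Fin n)))
    (F : EuclideanSpace ℝ (Fin n) → ℝ) (u : EuclideanSpace ℝ (Fin n)) : ℝ :=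
  (lik n ρ μX u)⁻¹ * ∫ x, Real.exp (ρ * ⟪u, x⟫ - ρ ^ 2 / 2 * ‖x‖ ^ 2) * F x ∂μX

noncomputable def postMean (n : ℕ) (ρ : ℝ) (μX : Measure (EuclideanSpace ℝ (Fin n)))
    (u : EuclideanSpace ℝ (Fin n)) : EuclideanSpace ℝ (Fin n) :=
  (lik n ρ μX u)⁻¹ • ∫ x, Real.exp (ρ * ⟪u, x⟫ - ρ ^ 2 / 2 * ‖x‖ ^ 2) • x ∂μX

open scoped Nat

section CalculusOfLog

variable {E : Type*} [NormedAddCommGroup E] [NormedSpace ℝ E]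

theorem iteratedFDeriv_two_log_apply {f : E → ℝ} {f' : E → E →L[ℝ] ℝ}
    {f'' : E →L[ℝ] E →L[ℝ] ℝ} {u : E} (hf0 : ∀ v, f v ≠ 0)
    (hf : ∀ v, HasFDerivAt f (f' v) v) (hf' : HasFDerivAt f' f'' u) (h : E) :
    iteratedFDeriv ℝ 2 (fun v => Real.log (f v)) u (fun _ => h)
      = f'' h h / f u - (f' u h / f u) ^ 2 := by
  have hlog : fderiv ℝ (fun v => Real.log (f v)) = fun v => (f v)⁻¹ • f' v :=
    funext fun v => ((Real.hasDerivAt_log (hf0 v)).comp_hasFDerivAt v (hf v)).fderiv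
  have hinv : HasFDerivAt (fun v => (f v)⁻¹) (-(f u ^ 2)⁻¹ • f' u) u :=
    (hasDerivAt_inv (hf0 u)).comp_hasFDerivAt u (hf u)
  have hd : HasFDerivAt (fun v => (f v)⁻¹ • f' v)
      ((f u)⁻¹ • f'' + (-(f u ^ 2)⁻¹ • f' u).smulRight (f' u)) u := hinv.smul hf'
  rw [iteratedFDeriv_two_apply, hlog, hd.fderiv]
  simp only [add_apply, smul_apply, ContinuousLinearMap.smulRight_apply, smul_eq_mul]
  field_simp
  ring

end CalculusOfLog

theorem pow_mul_exp_sub_sq_le {ρ t : ℝ} (hρ : 0 < ρ) (ht : 0 ≤ t) (k : ℕ) :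
    t ^ k * exp (ρ * t - ρ ^ 2 / 2 * t ^ 2) ≤ k ! / ρ ^ k * exp 2 := by
  have hpow : (ρ * t) ^ k ≤ k ! * exp (ρ * t) := by
    have := pow_div_factorial_le_exp _ (mul_nonneg hρ.le ht) k
    rwa [div_le_iff₀ (by positivity), mul_comm (exp _)] at this
  -- `2s - s²/2 ≤ 2` for `s = ρt`
  have hexp : exp (ρ * t) * exp (ρ * t - ρ ^ 2 / 2 * t ^ 2) ≤ exp 2 := by
    rw [← exp_add]
    exact exp_le_exp.2 (by nlinarith [sq_nonneg (ρ * t - 2)])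
  calc t ^ k * exp (ρ * t - ρ ^ 2 / 2 * t ^ 2)
      = (ρ * t) ^ k / ρ ^ k * exp (ρ * t - ρ ^ 2 / 2 * t ^ 2) := by
        rw [mul_pow]; field_simp
    _ ≤ k ! * exp (ρ * t) / ρ ^ k * exp (ρ * t - ρ ^ 2 / 2 * t ^ 2) := by gcongr
    _ = k ! / ρ ^ k * (exp (ρ * t) * exp (ρ * t - ρ ^ 2 / 2 * t ^ 2)) := by ring
    _ ≤ k ! / ρ ^ k * exp 2 := by gcongr

@[fun_prop]
theorem Continuous.clm_smulRight {𝕜 X E F : Type*} [NontriviallyNormedField 𝕜]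
    [TopologicalSpace X] [SeminormedAddCommGroup E] [NormedSpace 𝕜 E]
    [SeminormedAddCommGroup F] [NormedSpace 𝕜 F] {f : X → StrongDual 𝕜 E} {g : X → F}
    (hf : Continuous f) (hg : Continuous g) :
    Continuous fun x => (f x).smulRight (g x) :=
  (ContinuousLinearMap.smulRightL 𝕜 E F).continuous₂.comp₂ hf hg

section GaussianTilt

variable {E : Type*} [NormedAddCommGroup E] [InnerProductSpace ℝ E]
  {G : Type*} [NormedAddCommGroup G] [NormedSpace ℝ G]

noncomputable def gaussianTilt (ρ : ℝ) (v x : E) : ℝ :=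
  exp (ρ * ⟪v, x⟫ - ρ ^ 2 / 2 * ‖x‖ ^ 2)

theorem gaussianTilt_pos (ρ : ℝ) (v x : E) : 0 < gaussianTilt ρ v x := exp_pos _

@[fun_prop]
theorem continuous_gaussianTilt (ρ : ℝ) (v : E) : Continuous (gaussianTilt ρ v) := by
  unfold gaussianTilt; fun_prop

theorem hasFDerivAt_gaussianTilt (ρ : ℝ) (v x : E) :
    HasFDerivAt (fun v => gaussianTilt ρ v x) ((ρ * gaussianTilt ρ v x) • innerSL ℝ x) v := by
  have hlin : HasFDerivAt (fun v => ρ * ⟪v, x⟫ - ρ ^ 2 / 2 * ‖x‖ ^ 2) (ρ • innerSL ℝ x) v := by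
    simp_rw [real_inner_comm x, ← innerSL_apply_apply ℝ]
    exact ((innerSL ℝ x).hasFDerivAt.const_mul ρ).sub_const _
  refine ((hasDerivAt_exp _).comp_hasFDerivAt v hlin).congr_fderiv ?_
  rw [smul_smul, mul_comm]
  rfl

theorem pow_mul_gaussianTilt_le {ρ : ℝ} (hρ : 0 < ρ) (k : ℕ) {u v : E} (hv : dist v u ≤ 1)
    (x : E) :
    ‖x‖ ^ k * gaussianTilt ρ v x ≤ k ! / ρ ^ k * exp 2 * exp (ρ * ⟪x, u⟫) := by
  have hinner : ⟪v, x⟫ ≤ ⟪x, u⟫ + ‖x‖ := by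
    have := (real_inner_le_norm (v - u) x).trans
      (mul_le_of_le_one_left (norm_nonneg x) (dist_eq_norm v u ▸ hv))
    rw [inner_sub_left] at this
    linarith [real_inner_comm x u]
  have htilt : gaussianTilt ρ v x
      ≤ exp (ρ * ⟪x, u⟫) * exp (ρ * ‖x‖ - ρ ^ 2 / 2 * ‖x‖ ^ 2) := by
    rw [gaussianTilt, ← exp_add]
    exact exp_le_exp.2 (by nlinarith)
  calc ‖x‖ ^ k * gaussianTilt ρ v x
      ≤ ‖x‖ ^ k * (exp (ρ * ⟪x, u⟫) * exp (ρ * ‖x‖ - ρ ^ 2 / 2 * ‖x‖ ^ 2)) := by gcongr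
    _ = exp (ρ * ⟪x, u⟫) * (‖x‖ ^ k * exp (ρ * ‖x‖ - ρ ^ 2 / 2 * ‖x‖ ^ 2)) := by ring
    _ ≤ exp (ρ * ⟪x, u⟫) * (k ! / ρ ^ k * exp 2) :=
      mul_le_mul_of_nonneg_left (pow_mul_exp_sub_sq_le hρ (norm_nonneg x) k) (exp_pos _).le
    _ = k ! / ρ ^ k * exp 2 * exp (ρ * ⟪x, u⟫) := by ring

theorem norm_innerSL_smulRight_le {g : E → G} {k : ℕ} {C : ℝ}
    (hg : ∀ x, ‖g x‖ ≤ C * ‖x‖ ^ k) (x : E) :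
    ‖(innerSL ℝ x).smulRight (g x)‖ ≤ C * ‖x‖ ^ (k + 1) := by
  rw [ContinuousLinearMap.norm_smulRight_apply, innerSL_apply_norm, pow_succ]
  nlinarith [hg x, norm_nonneg x]

variable [MeasurableSpace E] [BorelSpace E] [SecondCountableTopology E] {μ : Measure E}

-- without this, instance search for `SecondCountableTopologyEither E (E →L[ℝ] ℝ)` times out
attribute [local instance 101] secondCountableTopologyEither_of_left

theorem integrable_pow_mul_gaussianTilt {ρ : ℝ} (hρ : 0 < ρ) {u : E}
    (hu : Integrable (fun x => exp (ρ * ⟪x, u⟫)) μ) (k : ℕ) :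
    Integrable (fun x => ‖x‖ ^ k * gaussianTilt ρ u x) μ := by
  refine (hu.const_mul (k ! / ρ ^ k * exp 2)).mono' (by fun_prop) (.of_forall fun x => ?_)
  rw [Real.norm_of_nonneg (by positivity [gaussianTilt_pos ρ u x])]
  exact pow_mul_gaussianTilt_le hρ k (by simp) x

theorem integrable_gaussianTilt_smul {ρ : ℝ} (hρ : 0 < ρ) {u : E}
    (hu : Integrable (fun x => exp (ρ * ⟪x, u⟫)) μ) {g : E → G} (hg : Continuous g) {k : ℕ}
    {C : ℝ} (hgk : ∀ x, ‖g x‖ ≤ C * ‖x‖ ^ k) :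
    Integrable (fun x => gaussianTilt ρ u x • g x) μ := by
  refine ((integrable_pow_mul_gaussianTilt hρ hu k).const_mul C).mono' (by fun_prop)
    (.of_forall fun x => ?_)
  rw [norm_smul, Real.norm_of_nonneg (gaussianTilt_pos ρ u x).le]
  nlinarith [hgk x, gaussianTilt_pos ρ u x]

theorem hasFDerivAt_integral_gaussianTilt_smul {ρ : ℝ} (hρ : 0 < ρ) {u : E}
    (hu : Integrable (fun x => exp (ρ * ⟪x, u⟫)) μ) {g : E → G} (hg : Continuous g) {k : ℕ}
    {C : ℝ} (hgk : ∀ x, ‖g x‖ ≤ C * ‖x‖ ^ k) :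
    HasFDerivAt (fun v => ∫ x, gaussianTilt ρ v x • g x ∂μ)
      (ρ • ∫ x, gaussianTilt ρ u x • (innerSL ℝ x).smulRight (g x) ∂μ) u := by
  have hderiv : ∀ v x, HasFDerivAt (fun v => gaussianTilt ρ v x • g x)
      (ρ • gaussianTilt ρ v x • (innerSL ℝ x).smulRight (g x)) v := fun v x => by
    refine ((hasFDerivAt_gaussianTilt ρ v x).smul_const (g x)).congr_fderiv ?_
    ext h
    simp only [ContinuousLinearMap.smulRight_apply, smul_apply, smul_smul, smul_eq_mul]
  have hbound : ∀ v ∈ Metric.ball u 1, ∀ x,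
      ‖ρ • gaussianTilt ρ v x • (innerSL ℝ x).smulRight (g x)‖
        ≤ ρ * |C| * ((k + 1) ! / ρ ^ (k + 1) * exp 2 * exp (ρ * ⟪x, u⟫)) := fun v hv x => by
    have htilt := gaussianTilt_pos ρ v x
    have hg' := norm_innerSL_smulRight_le (fun x => (hgk x).trans
      (mul_le_mul_of_nonneg_right (le_abs_self C) (by positivity))) x
    rw [norm_smul, norm_smul, Real.norm_of_nonneg hρ.le, Real.norm_of_nonneg htilt.le,
      mul_assoc ρ |C|]
    refine mul_le_mul_of_nonneg_left ?_ hρ.le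
    calc gaussianTilt ρ v x * ‖(innerSL ℝ x).smulRight (g x)‖
        ≤ gaussianTilt ρ v x * (|C| * ‖x‖ ^ (k + 1)) := by gcongr
      _ = |C| * (‖x‖ ^ (k + 1) * gaussianTilt ρ v x) := by ring
      _ ≤ _ := mul_le_mul_of_nonneg_left
        (pow_mul_gaussianTilt_le hρ _ (Metric.mem_ball.1 hv).le x) (abs_nonneg C)
  rw [← integral_smul]
  exact hasFDerivAt_integral_of_dominated_of_fderiv_le (Metric.ball_mem_nhds u one_pos)
    (.of_forall fun v => by fun_prop) (integrable_gaussianTilt_smul hρ hu hg hgk)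
    (by fun_prop) (.of_forall fun x v hv => hbound v hv x) ((hu.const_mul _).const_mul _)
    (.of_forall fun x v _ => hderiv v x)

end GaussianTilt

theorem second_deriv_log_likelihood_eq_posterior_variance_general (n : ℕ) (ρ : ℝ) (hρ : 0 < ρ)
    (μX : Measure (EuclideanSpace ℝ (Fin n)))
    (hexp : ∀ (α : ℝ) (h : EuclideanSpace ℝ (Fin n)),
      Integrable (fun x => Real.exp (α * ⟪x, h⟫)) μX)
    (hpos : ∀ u, 0 < lik n ρ μX u)
    (h u : EuclideanSpace ℝ (Fin n)) :
    iteratedFDeriv ℝ 2 (fun v => Real.log (lik n ρ μX v)) u (fun _ => h)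
      = ρ ^ 2 * (postExp n ρ μX (fun x => ⟪x, h⟫ ^ 2) u
          - (postExp n ρ μX (fun x => ⟪x, h⟫) u) ^ 2) := by
  set g : EuclideanSpace ℝ (Fin n) → StrongDual ℝ (EuclideanSpace ℝ (Fin n)) :=
    fun x => (innerSL ℝ x).smulRight (1 : ℝ)
  have hg : ∀ x, ‖g x‖ ≤ 1 * ‖x‖ ^ (0 + 1) :=
    norm_innerSL_smulRight_le (fun _ => by simp)
  have hlik : lik n ρ μX = fun v => ∫ x, gaussianTilt ρ v x • (1 : ℝ) ∂μX := by
    simp only [smul_eq_mul, mul_one]; rfl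
  have hD1 : ∀ v, HasFDerivAt (lik n ρ μX) (ρ • ∫ x, gaussianTilt ρ v x • g x ∂μX) v :=
    fun v => hlik ▸ hasFDerivAt_integral_gaussianTilt_smul hρ (hexp ρ v) continuous_const
      (k := 0) (C := 1) (by simp)
  have hD2 := (hasFDerivAt_integral_gaussianTilt_smul hρ (hexp ρ u) (by fun_prop) hg).const_smul ρ
  have hint := integrable_gaussianTilt_smul hρ (hexp ρ u) (by fun_prop)
    (norm_innerSL_smulRight_le hg)
  have hpost : ∀ F, postExp n ρ μX F u = (∫ x, gaussianTilt ρ u x * F x ∂μX) / lik n ρ μX u :=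
    fun F => inv_mul_eq_div _ _
  have hint_h := hint.apply_continuousLinearMap h
  simp only [smul_apply] at hint_h
  rw [iteratedFDeriv_two_log_apply (fun v => (hpos v).ne') hD1 hD2]
  simp only [smul_apply, ContinuousLinearMap.integral_apply hint,
    ContinuousLinearMap.integral_apply hint_h,
    ContinuousLinearMap.integral_apply (integrable_gaussianTilt_smul hρ (hexp ρ u) (by fun_prop) hg)]
  simp only [ContinuousLinearMap.smulRight_apply, smul_apply, innerSL_apply_apply, g, smul_eq_mul,
    mul_one, ← sq, hpost]
  ring

/-- ∇²_{h,h} log ℓ(u) = ρ² (E[⟨x,h⟩²|y=u] − (E[⟨x,h⟩|y=u])²). -/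
theorem second_deriv_log_likelihood_eq_posterior_variance (n : ℕ) (ρ : ℝ) (hρ : 0 < ρ)
    (μX : Measure (EuclideanSpace ℝ (Fin n))) [IsProbabilityMeasure μX]
    (hexp : ∀ (α : ℝ) (h : EuclideanSpace ℝ (Fin n)),
      Integrable (fun x => Real.exp (α * ⟪x, h⟫)) μX)
    (hpos : ∀ u, 0 < lik n ρ μX u)
    (h u : EuclideanSpace ℝ (Fin n)) :
    iteratedFDeriv ℝ 2 (fun v => Real.log (lik n ρ μX v)) u (fun _ => h)
      = ρ ^ 2 * (postExp n ρ μX (fun x => ⟪x, h⟫ ^ 2) u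
          - (postExp n ρ μX (fun x => ⟪x, h⟫) u) ^ 2) :=
  second_deriv_log_likelihood_eq_posterior_variance_general n ρ hρ μX hexp hpos h u
end

section
/- In the additive Gaussian channel y = ρx + w, conditional moments satisfy the recursion: for h₁,…,h_k ∈ ℝ^n, E[∏_{i=1}^k ⟨h_i,x⟩ | y = u] = ⟨h_k, E[x | y = u]⟩ · E[∏_{i=1}^{k−1} ⟨h_i,x⟩ | y = u] + (1/ρ) ∇_{h_k} ( E[∏_{i=1}^{k−1} ⟨h_i,x⟩ | y = u] ), where ∇_{h_k} is the directional derivative in u. -/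
open MeasureTheory Real
open scoped RealInnerProductSpace ENNReal

/-!
Differentiating the tilt `exp (ρ⟪u, x⟫ - ρ²‖x‖²/2)` in `u` brings down the factor `ρ⟪v, x⟫`,
so by the quotient rule `ρ⁻¹ ∇_v E[F | y = u]` is the posterior covariance
`E[F ⟪v, x⟫ | y = u] - E[F | y = u] ⟪v, E[x | y = u]⟫`. Taking `F = ∏_{i<k} ⟪h_i, x⟫` and
`v = h_k` gives the recursion. Differentiation under the integral is legitimate because the
Gaussian factor `exp (-ρ²‖x‖²/2)` beats the polynomial growth of the integrands, uniformly for
`u` in a ball.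
-/

lemma pow_mul_exp_le {a : ℝ} (ha : 0 < a) (r : ℝ) (m : ℕ) {t : ℝ} (ht : 0 ≤ t) :
    t ^ m * exp (r * t - a / 2 * t ^ 2) ≤ exp ((r + m) ^ 2 / (2 * a)) := by
  have hpow : t ^ m ≤ exp (m * t) := by
    calc t ^ m ≤ exp t ^ m := pow_le_pow_left₀ ht (by linarith [add_one_le_exp t]) m
      _ = exp (m * t) := by rw [← exp_nat_mul]
  calc t ^ m * exp (r * t - a / 2 * t ^ 2)
      ≤ exp (m * t) * exp (r * t - a / 2 * t ^ 2) := by gcongr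
    _ = exp ((r + m) * t - a / 2 * t ^ 2) := by rw [← exp_add]; ring_nf
    _ ≤ exp ((r + m) ^ 2 / (2 * a)) := by
        gcongr
        rw [le_div_iff₀ (by positivity)]
        nlinarith [sq_nonneg (a * t - (r + m))]

lemma abs_prod_inner_le {E ι : Type*} [NormedAddCommGroup E] [InnerProductSpace ℝ E]
    (s : Finset ι) (h : ι → E) (x : E) :
    |∏ i ∈ s, ⟪h i, x⟫| ≤ (∏ i ∈ s, ‖h i‖) * ‖x‖ ^ s.card := by
  rw [Finset.abs_prod, ← Finset.prod_const, ← Finset.prod_mul_distrib]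
  exact Finset.prod_le_prod (fun _ _ => abs_nonneg _) fun i _ => abs_real_inner_le_norm _ _

lemma abs_mul_norm_le {E : Type*} [NormedAddCommGroup E] {c : ℝ} {m : ℕ} {F : E → ℝ}
    (hF : ∀ x, |F x| ≤ c * ‖x‖ ^ m) (x : E) :
    |F x * ‖x‖| ≤ c * ‖x‖ ^ (m + 1) := by
  rw [abs_mul, abs_norm, pow_succ, ← mul_assoc]
  gcongr
  exact hF x

section GaussTilt

variable {E : Type*} [NormedAddCommGroup E] [InnerProductSpace ℝ E] {ρ : ℝ}

/-- The likelihood ratio `φ(u - ρx) / φ(u)` of the observation `y = u` given `x`, for `φ` the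
standard Gaussian density. -/
noncomputable def gaussTilt (ρ : ℝ) (u x : E) : ℝ :=
  exp (ρ * ⟪u, x⟫ - ρ ^ 2 / 2 * ‖x‖ ^ 2)

lemma continuous_gaussTilt (ρ : ℝ) (u : E) : Continuous (gaussTilt ρ u) := by
  unfold gaussTilt
  fun_prop

lemma gaussTilt_pos (ρ : ℝ) (u x : E) : 0 < gaussTilt ρ u x := exp_pos _

lemma abs_gaussTilt_mul_le (hρ : ρ ≠ 0) {c : ℝ} (hc : 0 ≤ c) {m : ℕ} {F : E → ℝ}
    (hF : ∀ x, |F x| ≤ c * ‖x‖ ^ m) {R : ℝ} {u : E} (hu : ‖u‖ ≤ R) (x : E) :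
    |gaussTilt ρ u x * F x| ≤ c * exp ((|ρ| * R + m) ^ 2 / (2 * ρ ^ 2)) := by
  have hinner : ρ * ⟪u, x⟫ ≤ |ρ| * R * ‖x‖ :=
    calc ρ * ⟪u, x⟫ ≤ |ρ| * (‖u‖ * ‖x‖) :=
          (le_abs_self _).trans (by rw [abs_mul]; gcongr; exact abs_real_inner_le_norm u x)
      _ ≤ |ρ| * R * ‖x‖ := by rw [← mul_assoc]; gcongr
  have htilt : gaussTilt ρ u x ≤ exp (|ρ| * R * ‖x‖ - ρ ^ 2 / 2 * ‖x‖ ^ 2) := by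
    unfold gaussTilt
    gcongr
  calc |gaussTilt ρ u x * F x| = gaussTilt ρ u x * |F x| := by
        rw [abs_mul, abs_of_pos (gaussTilt_pos ρ u x)]
    _ ≤ exp (|ρ| * R * ‖x‖ - ρ ^ 2 / 2 * ‖x‖ ^ 2) * (c * ‖x‖ ^ m) := by
        gcongr
        exact hF x
    _ = c * (‖x‖ ^ m * exp (|ρ| * R * ‖x‖ - ρ ^ 2 / 2 * ‖x‖ ^ 2)) := by ring
    _ ≤ c * exp ((|ρ| * R + m) ^ 2 / (2 * ρ ^ 2)) := by
        gcongr
        exact pow_mul_exp_le (by positivity) _ m (norm_nonneg x)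

lemma hasFDerivAt_gaussTilt_mul (ρ a : ℝ) (x u : E) :
    HasFDerivAt (fun u => gaussTilt ρ u x * a) (ρ • innerSL ℝ ((gaussTilt ρ u x * a) • x)) u := by
  have hexponent : HasFDerivAt (fun u => ρ * ⟪u, x⟫ - ρ ^ 2 / 2 * ‖x‖ ^ 2)
      (ρ • innerSL ℝ x) u := by
    simpa only [innerSL_apply_apply, real_inner_comm x] using
      ((innerSL ℝ x).hasFDerivAt.const_mul ρ).sub_const (ρ ^ 2 / 2 * ‖x‖ ^ 2)
  refine (hexponent.exp.mul_const a).congr_fderiv ?_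
  ext v
  simp only [gaussTilt, FunLike.coe_smul, Pi.smul_apply, innerSL_apply_apply,
    smul_eq_mul, real_inner_smul_left]
  ring

variable [MeasurableSpace E] [BorelSpace E]
  {μ : Measure E} [IsFiniteMeasure μ] {c : ℝ} {m : ℕ} {F : E → ℝ}

lemma integrable_gaussTilt_mul (hρ : ρ ≠ 0) (hc : 0 ≤ c) (hFc : Continuous F)
    (hF : ∀ x, |F x| ≤ c * ‖x‖ ^ m) (u : E) :
    Integrable (fun x => gaussTilt ρ u x * F x) μ :=
  (integrable_const _).mono' ((continuous_gaussTilt ρ u).mul hFc).aestronglyMeasurable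
    (.of_forall (abs_gaussTilt_mul_le hρ hc hF le_rfl))

lemma integrable_gaussTilt_mul_smul [SecondCountableTopology E] (hρ : ρ ≠ 0) (hc : 0 ≤ c)
    (hFc : Continuous F) (hF : ∀ x, |F x| ≤ c * ‖x‖ ^ m) (u : E) :
    Integrable (fun x => (gaussTilt ρ u x * F x) • x) μ := by
  refine (integrable_const (c * exp ((|ρ| * ‖u‖ + (m + 1 : ℕ)) ^ 2 / (2 * ρ ^ 2)))).mono'
    (((continuous_gaussTilt ρ u).mul hFc).smul continuous_id).aestronglyMeasurable
    (.of_forall fun x => ?_)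
  rw [norm_smul, Real.norm_eq_abs, ← abs_norm x, ← abs_mul, mul_assoc]
  exact abs_gaussTilt_mul_le hρ hc (abs_mul_norm_le hF) le_rfl x

theorem hasFDerivAt_integral_gaussTilt_mul [SecondCountableTopology E] [CompleteSpace E]
    (hρ : ρ ≠ 0) (hc : 0 ≤ c) (hFc : Continuous F) (hF : ∀ x, |F x| ≤ c * ‖x‖ ^ m) (u : E) :
    HasFDerivAt (fun u => ∫ x, gaussTilt ρ u x * F x ∂μ)
      (ρ • innerSL ℝ (∫ x, (gaussTilt ρ u x * F x) • x ∂μ)) u := by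
  have hdominated : ∀ x, ∀ u' ∈ Metric.ball u 1,
      ‖ρ • innerSL ℝ ((gaussTilt ρ u' x * F x) • x)‖
        ≤ |ρ| * (c * exp ((|ρ| * (‖u‖ + 1) + (m + 1 : ℕ)) ^ 2 / (2 * ρ ^ 2))) := by
    intro x u' hu'
    have hnorm : ‖u'‖ ≤ ‖u‖ + 1 :=
      (norm_le_norm_add_norm_sub' u' u).trans (by gcongr; exact (mem_ball_iff_norm.mp hu').le)
    rw [norm_smul, innerSL_apply_norm, norm_smul, Real.norm_eq_abs, Real.norm_eq_abs,
      ← abs_norm x, ← abs_mul, mul_assoc]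
    gcongr
    exact abs_gaussTilt_mul_le hρ hc (abs_mul_norm_le hF) hnorm x
  have hderiv := hasFDerivAt_integral_of_dominated_of_fderiv_le (μ := μ)
    (Metric.ball_mem_nhds u one_pos)
    (.of_forall fun u' => ((continuous_gaussTilt ρ u').mul hFc).aestronglyMeasurable)
    (integrable_gaussTilt_mul hρ hc hFc hF u)
    (((innerSL ℝ).continuous.comp_aestronglyMeasurable
      (integrable_gaussTilt_mul_smul hρ hc hFc hF u).aestronglyMeasurable).const_smul ρ)
    (.of_forall hdominated) (integrable_const _)
    (.of_forall fun x u' _ => hasFDerivAt_gaussTilt_mul ρ (F x) x u')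
  rwa [integral_smul, (innerSL ℝ).integral_comp_comm
    (integrable_gaussTilt_mul_smul hρ hc hFc hF u)] at hderiv

end GaussTilt

section Posterior

variable {n : ℕ} {ρ : ℝ} {μX : Measure (EuclideanSpace ℝ (Fin n))}

lemma lik_pos [IsProbabilityMeasure μX] (hρ : ρ ≠ 0) (u : EuclideanSpace ℝ (Fin n)) :
    0 < lik n ρ μX u :=
  integral_exp_pos <| by
    have := integrable_gaussTilt_mul (μ := μX) (F := fun _ => 1) (m := 0) hρ
      zero_le_one continuous_const (by simp) u
    simp only [mul_one] at this
    exact this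

lemma hasFDerivAt_lik [IsFiniteMeasure μX] (hρ : ρ ≠ 0) (u : EuclideanSpace ℝ (Fin n)) :
    HasFDerivAt (lik n ρ μX) (ρ • innerSL ℝ (∫ x, gaussTilt ρ u x • x ∂μX)) u := by
  have := hasFDerivAt_integral_gaussTilt_mul (μ := μX) (F := fun _ => 1)
    (m := 0) hρ zero_le_one continuous_const (by simp) u
  simp only [mul_one] at this
  exact this

lemma fderiv_postExp_apply [IsProbabilityMeasure μX] (hρ : ρ ≠ 0) {c : ℝ} (hc : 0 ≤ c) {m : ℕ}
    {F : EuclideanSpace ℝ (Fin n) → ℝ} (hFc : Continuous F) (hF : ∀ x, |F x| ≤ c * ‖x‖ ^ m)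
    (u v : EuclideanSpace ℝ (Fin n)) :
    fderiv ℝ (postExp n ρ μX F) u v
      = ρ * (postExp n ρ μX (fun x => F x * ⟪v, x⟫) u
          - postExp n ρ μX F u * ⟪v, postMean n ρ μX u⟫) := by
  have hquotient : HasFDerivAt (postExp n ρ μX F) _ u :=
    ((hasFDerivAt_inv (lik_pos (μX := μX) hρ u).ne').comp u (hasFDerivAt_lik hρ u)).mul
    (hasFDerivAt_integral_gaussTilt_mul (μ := μX) hρ hc hFc hF u)
  have hinner : ⟪∫ x, (gaussTilt ρ u x * F x) • x ∂μX, v⟫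
      = ∫ x, gaussTilt ρ u x * (F x * ⟪v, x⟫) ∂μX := by
    rw [real_inner_comm, ← integral_inner (integrable_gaussTilt_mul_smul hρ hc hFc hF u)]
    simp only [real_inner_smul_right, mul_assoc]
  rw [hquotient.fderiv]
  simp only [add_apply, smul_apply, ContinuousLinearMap.comp_apply, innerSL_apply_apply,
    Function.comp_apply, ContinuousLinearMap.toSpanSingleton_apply, smul_eq_mul, hinner]
  simp only [postExp, postMean, real_inner_smul_right, real_inner_comm v, gaussTilt]
  ring

end Posterior

theorem posterior_moment_recursion_general (n : ℕ) (ρ : ℝ) (hρ : 0 < ρ)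
    (μX : Measure (EuclideanSpace ℝ (Fin n))) [IsProbabilityMeasure μX]
    (k : ℕ) (h : ℕ → EuclideanSpace ℝ (Fin n)) (u : EuclideanSpace ℝ (Fin n)) :
    postExp n ρ μX (fun x => ∏ i ∈ Finset.range (k + 1), ⟪h i, x⟫) u
      = ⟪h k, postMean n ρ μX u⟫
          * postExp n ρ μX (fun x => ∏ i ∈ Finset.range k, ⟪h i, x⟫) u
        + ρ⁻¹ * fderiv ℝ (postExp n ρ μX (fun x => ∏ i ∈ Finset.range k, ⟪h i, x⟫)) u (h k) := by
  have hcovariance := fderiv_postExp_apply (μX := μX)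
    (F := fun x => ∏ i ∈ Finset.range k, ⟪h i, x⟫) hρ.ne'
    (Finset.prod_nonneg fun i _ => norm_nonneg (h i)) (by fun_prop)
    (fun x => by simpa using abs_prod_inner_le (Finset.range k) h x) u (h k)
  simp only [Finset.prod_range_succ, hcovariance, inv_mul_cancel_left₀ hρ.ne']
  ring

/-- recursion for conditional moments. -/
theorem posterior_moment_recursion (n : ℕ) (ρ : ℝ) (hρ : 0 < ρ)
    (μX : Measure (EuclideanSpace ℝ (Fin n))) [IsProbabilityMeasure μX]
    (hexp : ∀ (α : ℝ) (h : EuclideanSpace ℝ (Fin n)),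
      Integrable (fun x => Real.exp (α * ⟪x, h⟫)) μX)
    (hpos : ∀ u, 0 < lik n ρ μX u)
    (k : ℕ) (h : ℕ → EuclideanSpace ℝ (Fin n)) (u : EuclideanSpace ℝ (Fin n)) :
    postExp n ρ μX (fun x => ∏ i ∈ Finset.range (k + 1), ⟪h i, x⟫) u
      = ⟪h k, postMean n ρ μX u⟫
          * postExp n ρ μX (fun x => ∏ i ∈ Finset.range k, ⟪h i, x⟫) u
        + ρ⁻¹ * fderiv ℝ (postExp n ρ μX (fun x => ∏ i ∈ Finset.range k, ⟪h i, x⟫)) u (h k) :=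
  posterior_moment_recursion_general n ρ hρ μX k h u
end

section
/- Conditional density transfer lemma: assume μ_Y and μ_{Y|X=x} are absolutely continuous with respect to μ_W for μ_X-a.e. x. Then for all bounded measurable ψ(x,y): ∫∫ ψ(x,y) (dμ_{Y|X}/dμ_W)(y,x) dμ_X(x) dμ_W(y) = ∫∫ ψ(x,y) (dμ_Y/dμ_W)(y) dμ_{X|Y}(dx; y) dμ_W(dy). -/
open MeasureTheory ProbabilityTheory

/-- conditional density transfer lemma: if `κ` is the conditional law of `Y`
given `X`, `η` the conditional law of `X` given `Y`, and `κ x ≪ μW` a.e. and `μY ≪ μW`,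
then for bounded measurable ψ,
∫∫ ψ(x,y) (dμ_{Y|X}/dμ_W)(y,x) dμ_W(y) dμ_X(x)
  = ∫∫ ψ(x,y) (dμ_Y/dμ_W)(y) dμ_{X|Y}(dx;y) dμ_W(dy). -/
theorem conditional_density_transfer
    {X Y : Type*} [MeasurableSpace X] [MeasurableSpace Y]
    (μX : Measure X) [IsProbabilityMeasure μX]
    (μY : Measure Y) [IsProbabilityMeasure μY]
    (μW : Measure Y) [SigmaFinite μW]
    (κ : Kernel X Y) [IsMarkovKernel κ]
    (η : Kernel Y X) [IsMarkovKernel η]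
    -- μY is the second marginal of the joint law μX ⊗ₘ κ
    (hmarg : μY = (μX.compProd κ).map Prod.snd)
    -- η is a regular conditional distribution of X given Y :
    -- the joint law of (X, Y) coincides with that built from μY and η
    (hcond : μX.compProd κ = (μY.compProd η).map Prod.swap)
    (hac : ∀ᵐ x ∂μX, κ x ≪ μW) (hacY : μY ≪ μW)
    (ψ : X → Y → ℝ) (hψ : Measurable (Function.uncurry ψ))
    (hbd : ∃ C, ∀ x y, |ψ x y| ≤ C) :
    ∫ x, ∫ y, ψ x y * ((κ x).rnDeriv μW y).toReal ∂μW ∂μX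
      = ∫ y, (∫ x, ψ x y ∂(η y)) * (μY.rnDeriv μW y).toReal ∂μW := by
  obtain ⟨C, hC⟩ := hbd
  have hint : Integrable (fun p : X × Y => ψ p.1 p.2) (μX.compProd κ) := by
    refine Integrable.mono' (integrable_const C) hψ.aestronglyMeasurable ?_
    exact Filter.Eventually.of_forall fun p => by
      simpa [Function.uncurry, Real.norm_eq_abs] using hC p.1 p.2
  have hint2 : Integrable (fun p : Y × X => ψ p.2 p.1) (μY.compProd η) := by
    refine Integrable.mono' (integrable_const C) ?_ ?_
    · exact (hψ.comp measurable_swap).aestronglyMeasurable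
    · exact Filter.Eventually.of_forall fun p => by
        simpa [Real.norm_eq_abs] using hC p.2 p.1
  have lhs : ∫ x, ∫ y, ψ x y * ((κ x).rnDeriv μW y).toReal ∂μW ∂μX
      = ∫ x, ∫ y, ψ x y ∂(κ x) ∂μX := by
    refine integral_congr_ae ?_
    filter_upwards [hac] with x hx
    rw [← MeasureTheory.integral_rnDeriv_smul hx (f := fun y => ψ x y)]
    simp_rw [smul_eq_mul, mul_comm]
  have rhs : ∫ y, (∫ x, ψ x y ∂(η y)) * (μY.rnDeriv μW y).toReal ∂μW
      = ∫ y, ∫ x, ψ x y ∂(η y) ∂μY := by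
    rw [← MeasureTheory.integral_rnDeriv_smul hacY (f := fun y => ∫ x, ψ x y ∂(η y))]
    simp_rw [smul_eq_mul, mul_comm]
  rw [lhs, rhs]
  calc ∫ x, ∫ y, ψ x y ∂(κ x) ∂μX
      = ∫ p, ψ p.1 p.2 ∂(μX.compProd κ) := (Measure.integral_compProd hint).symm
    _ = ∫ p, ψ p.1 p.2 ∂((μY.compProd η).map Prod.swap) := by rw [hcond]
    _ = ∫ p, ψ p.2 p.1 ∂(μY.compProd η) :=
        integral_map measurable_swap.aemeasurable hψ.aestronglyMeasurable
    _ = ∫ y, ∫ x, ψ x y ∂(η y) ∂μY := Measure.integral_compProd hint2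
end
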